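/- Let M_0 be the 2×2 integer matrix with rows (1,1),(0,1) and M_1 the 2×2 integer matrix with rows (1,0),(1,1). For every positive integer n with binary expansion d_t d_{t−1} … d_0 (so d_t = 1 and n = Σ_{ℓ=0}^{t} d_ℓ·2^ℓ), b(n) equals the top entry of the column vector M_{d_0}·M_{d_1}·⋯·M_{d_t}·(1,0)^T. -/
import Mathlib


/-- The value of a word over the digits `{0,1,2}`, read as a (hyper)binary expansion:
`wordVal (x₀ … x_k) = Σ x_i · 2^(k-i)`. -/
def wordVal : List ℕ → ℕ
  | [] => 0
  | d :: w => d * 2 ^ w.length + wordVal w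

/-- `Hyp n` is the set of hyperbinary expansions of `n`: words over `{0,1,2}` with
nonzero leading digit whose value is `n` (the empty word is the unique expansion of `0`). -/
def Hyp (n : ℕ) : Set (List ℕ) :=
  {w | (∀ d ∈ w, d ≤ 2) ∧ w.head? ≠ some 0 ∧ wordVal w = n}

/-- Single-step reduction of type `→` : `(x02y, x10y)` or `(2y, 10y)`. -/
def StepArrow (a b : List ℕ) : Prop :=
  (∃ x y : List ℕ, a = x ++ 0 :: 2 :: y ∧ b = x ++ 1 :: 0 :: y) ∨
    (∃ y : List ℕ, a = 2 :: y ∧ b = 1 :: 0 :: y)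

/-- Single-step reduction of type `↠` : `(x12y, x20y)`. -/
def StepDouble (a b : List ℕ) : Prop :=
  ∃ x y : List ℕ, a = x ++ 1 :: 2 :: y ∧ b = x ++ 2 :: 0 :: y

/-- A single-step reduction (of either type). -/
def Step (a b : List ℕ) : Prop := StepArrow a b ∨ StepDouble a b

/-- `bFun n` is the number of hyperbinary expansions of `n`. -/
noncomputable def bFun (n : ℕ) : ℕ := (Hyp n).ncard

/-- The set of arcs of the graph `A(n)`: labeled single-step reductions between
hyperbinary expansions of `n`. -/
def arcs (n : ℕ) : Set (List ℕ × List ℕ) :=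
  {p | p.1 ∈ Hyp n ∧ p.2 ∈ Hyp n ∧ Step p.1 p.2}

/-- `aFun n` is the number of arcs of `A(n)`. -/
noncomputable def aFun (n : ℕ) : ℕ := (arcs n).ncard

/-- The cyclomatic number `v(n) = a(n) - b(n) + 1` of the connected graph `A(n)`. -/
noncomputable def vFun (n : ℕ) : ℕ := aFun n + 1 - bFun n

/-- The matrix `M₀` (for digit `0`) with rows `(1,1), (0,1)`, and `M₁` (for digit `1`)
with rows `(1,0), (1,1)`. -/
def sternMatrix (d : ℕ) : Matrix (Fin 2) (Fin 2) ℤ :=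
  if d = 0 then !![1, 1; 0, 1] else !![1, 0; 1, 1]

lemma wordVal_append (w : List ℕ) (d : ℕ) : wordVal (w ++ [d]) = 2 * wordVal w + d := by
  induction w with
  | nil => simp [wordVal]
  | cons a w ih => simp [wordVal, ih, pow_succ]; ring

lemma append_inj (d : ℕ) : Function.Injective (fun w : List ℕ => w ++ [d]) := by
  intro a b h
  simpa using h

lemma hyp_zero : Hyp 0 = {([] : List ℕ)} := by
  ext w
  constructor
  · rintro ⟨h1, h2, h3⟩
    cases w with
    | nil => rfl
    | cons a w =>
      exfalso
      simp [wordVal] at h3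
      simp [h3.1] at h2
  · rintro rfl
    exact ⟨by simp, by simp, rfl⟩

lemma mem_hyp_append {m d : ℕ} {q : List ℕ} (hq : q ∈ Hyp m) (hd : d ≤ 2)
    (hne : q = [] → d ≠ 0) : q ++ [d] ∈ Hyp (2 * m + d) := by
  obtain ⟨h1, h2, h3⟩ := hq
  refine ⟨?_, ?_, by rw [wordVal_append, h3]⟩
  · intro x hx
    rcases List.mem_append.1 hx with h | h
    · exact h1 x h
    · simp at h; omega
  · cases q with
    | nil => simpa using hne rfl
    | cons a q => simpa using h2

lemma hyp_split {n : ℕ} {w : List ℕ} (hw : w ∈ Hyp n) (hn : n ≠ 0) :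
    ∃ q a, w = q ++ [a] ∧ a ≤ 2 ∧ q ∈ Hyp ((n - a) / 2) ∧ 2 * ((n - a) / 2) + a = n := by
  obtain ⟨h1, h2, h3⟩ := hw
  rcases List.eq_nil_or_concat w with rfl | ⟨q, a, rfl⟩
  · simp [wordVal] at h3; omega
  simp only [List.concat_eq_append] at h1 h2 h3 ⊢
  rw [wordVal_append] at h3
  have ha : a ≤ 2 := h1 a (by simp)
  have hq : wordVal q = (n - a) / 2 := by omega
  refine ⟨q, a, rfl, ha, ⟨fun x hx => h1 x (by simp [hx]), ?_, hq⟩, by omega⟩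
  cases q with
  | nil => simp
  | cons b q => simpa using h2

lemma hyp_odd (m : ℕ) : Hyp (2 * m + 1) = (fun w => w ++ [1]) '' Hyp m := by
  ext w
  constructor
  · intro hw
    obtain ⟨q, a, rfl, ha, hq, harith⟩ := hyp_split hw (by omega)
    have ha1 : a = 1 := by omega
    subst ha1
    have : (2 * m + 1 - 1) / 2 = m := by omega
    rw [this] at hq
    exact ⟨q, hq, rfl⟩
  · rintro ⟨q, hq, rfl⟩
    exact mem_hyp_append hq (by norm_num) (by simp)

lemma hyp_even {m : ℕ} (hm : m ≠ 0) :
    Hyp (2 * m) = (fun w => w ++ [0]) '' Hyp m ∪ (fun w => w ++ [2]) '' Hyp (m - 1) := by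
  ext w
  constructor
  · intro hw
    obtain ⟨q, a, rfl, ha, hq, harith⟩ := hyp_split hw (by omega)
    have : a = 0 ∨ a = 2 := by omega
    rcases this with rfl | rfl
    · left
      have : (2 * m - 0) / 2 = m := by omega
      rw [this] at hq
      exact ⟨q, hq, rfl⟩
    · right
      have : (2 * m - 2) / 2 = m - 1 := by omega
      rw [this] at hq
      exact ⟨q, hq, rfl⟩
  · rintro (⟨q, hq, rfl⟩ | ⟨q, hq, rfl⟩)
    · have hqne : q ≠ [] := by
        rintro rfl
        exact hm (hq.2.2.symm.trans rfl)
      have := mem_hyp_append (d := 0) hq (by norm_num) (fun h => absurd h hqne)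
      simpa using this
    · have := mem_hyp_append (d := 2) hq (by norm_num) (by simp)
      have h2 : 2 * (m - 1) + 2 = 2 * m := by omega
      rwa [h2] at this

lemma hyp_finite (n : ℕ) : (Hyp n).Finite := by
  induction n using Nat.strong_induction_on with
  | _ n ih =>
    rcases Nat.even_or_odd n with ⟨m, hm⟩ | ⟨m, hm⟩
    · rcases Nat.eq_zero_or_pos m with rfl | hmpos
      · have : n = 0 := by omega
        rw [this, hyp_zero]; exact Set.finite_singleton _
      · have hn : n = 2 * m := by omega
        rw [hn, hyp_even (by omega)]
        exact ((ih m (by omega)).image _).union ((ih (m-1) (by omega)).image _)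
    · rw [hm, hyp_odd]
      exact (ih m (by omega)).image _

lemma bFun_zero : bFun 0 = 1 := by
  rw [bFun, hyp_zero]; simp

lemma bFun_odd (m : ℕ) : bFun (2 * m + 1) = bFun m := by
  rw [bFun, hyp_odd, Set.ncard_image_of_injective _ (append_inj 1), bFun]

lemma bFun_even {m : ℕ} (hm : m ≠ 0) : bFun (2 * m) = bFun m + bFun (m - 1) := by
  have hdisj : Disjoint ((fun w => w ++ [0]) '' Hyp m) ((fun w => w ++ [2]) '' Hyp (m - 1)) := by
    rw [Set.disjoint_left]
    rintro w ⟨q, _, rfl⟩ ⟨q', _, h⟩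
    have := congrArg List.getLast? h
    simp at this
  rw [bFun, hyp_even hm,
    Set.ncard_union_eq hdisj ((hyp_finite m).image _) ((hyp_finite (m-1)).image _),
    Set.ncard_image_of_injective _ (append_inj 0),
    Set.ncard_image_of_injective _ (append_inj 2)]
  rfl
noncomputable def bAux (n : ℕ) : ℤ := if n = 0 then 0 else bFun (n - 1)

lemma step0 (m : ℕ) : (bFun (2 * m) : ℤ) = bFun m + bAux m ∧ bAux (2 * m) = bAux m := by
  rcases Nat.eq_zero_or_pos m with rfl | hm
  · simp [bAux, bFun_zero]
  · constructor
    · rw [bFun_even (by omega), bAux, if_neg (by omega)]; push_cast; ring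
    · rw [bAux, if_neg (by omega), bAux, if_neg (by omega)]
      have : 2 * m - 1 = 2 * (m - 1) + 1 := by omega
      rw [this, bFun_odd]

lemma step1 (m : ℕ) : (bFun (2 * m + 1) : ℤ) = bFun m ∧ bAux (2 * m + 1) = bFun m + bAux m := by
  refine ⟨by rw [bFun_odd], ?_⟩
  rw [bAux, if_neg (by omega)]
  simp only [Nat.add_sub_cancel]
  exact (step0 m).1

lemma matrix_aux : ∀ (t : ℕ) (d : ℕ → ℕ), (∀ ℓ, ℓ ≤ t → d ℓ ≤ 1) →
    (List.ofFn fun i : Fin (t + 1) => sternMatrix (d i)).prod.mulVec ![1, 0] =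
      ![(bFun (∑ ℓ ∈ Finset.range (t + 1), d ℓ * 2 ^ ℓ) : ℤ),
        bAux (∑ ℓ ∈ Finset.range (t + 1), d ℓ * 2 ^ ℓ)] := by
  intro t
  induction t with
  | zero =>
    intro d hd
    have h0 : d 0 = 0 ∨ d 0 = 1 := by have := hd 0 le_rfl; omega
    have hb1 : bFun 1 = 1 := by have := bFun_odd 0; simpa [bFun_zero] using this
    rcases h0 with h | h <;>
      · funext i
        fin_cases i <;>
          simp [h, sternMatrix, bAux, bFun_zero, hb1, Matrix.mulVec, dotProduct,
            Fin.sum_univ_two]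
  | succ t ih =>
    intro d hd
    have hd' : ∀ ℓ, ℓ ≤ t → d (ℓ + 1) ≤ 1 := fun ℓ h => hd (ℓ + 1) (by omega)
    have IH := ih (fun ℓ => d (ℓ + 1)) hd'
    set S' := ∑ ℓ ∈ Finset.range (t + 1), d (ℓ + 1) * 2 ^ ℓ with hS'
    have hsum : ∑ ℓ ∈ Finset.range (t + 2), d ℓ * 2 ^ ℓ = 2 * S' + d 0 := by
      rw [Finset.sum_range_succ' (fun ℓ => d ℓ * 2 ^ ℓ) (t + 1)]
      simp only [pow_zero, mul_one, hS', Finset.mul_sum]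
      congr 1
      apply Finset.sum_congr rfl
      intro ℓ _
      ring
    have hlist : (List.ofFn fun i : Fin (t + 2) => sternMatrix (d i)) =
        sternMatrix (d 0) :: List.ofFn fun i : Fin (t + 1) => sternMatrix (d (i + 1)) := by
      rw [List.ofFn_succ]
      simp [Fin.val_succ]
    rw [hlist, List.prod_cons, ← Matrix.mulVec_mulVec, IH, hsum]
    have h0 : d 0 = 0 ∨ d 0 = 1 := by have := hd 0 (by omega); omega
    rcases h0 with h | h
    · have := step0 S'
      funext i
      fin_cases i <;>
        simp [h, sternMatrix, this.1, this.2, Matrix.mulVec, dotProduct,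
          Fin.sum_univ_two]
    · have := step1 S'
      funext i
      fin_cases i <;>
        simp [h, sternMatrix, this.1, this.2, Matrix.mulVec, dotProduct,
          Fin.sum_univ_two]


/-- If `n` has binary expansion `d_t d_(t-1) … d_0` (so `d_t = 1` and
`n = Σ_{ℓ=0}^{t} d_ℓ·2^ℓ`), then `b(n)` is the top entry of the column vector
`M_{d_0} · M_{d_1} · ⋯ · M_{d_t} · (1, 0)ᵀ`. -/
theorem b_eq_matrix_prod (n t : ℕ) (d : ℕ → ℕ)
    (hd : ∀ ℓ, ℓ ≤ t → d ℓ ≤ 1) (hdt : d t = 1)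
    (hn : n = ∑ ℓ ∈ Finset.range (t + 1), d ℓ * 2 ^ ℓ) :
    (bFun n : ℤ) =
      ((List.ofFn fun i : Fin (t + 1) => sternMatrix (d i)).prod.mulVec ![1, 0]) 0 := by
  rw [matrix_aux t d hd, hn]
  simp
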